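/- arXiv:nlin/0208021 — 5 statements merged into one kernel-verified Lean document; each statement's English description precedes it below -/
import Mathlib

section
/- Let q : ℝ → ℂ be continuous and let F, G, H : ℝ → ℂ be C³ functions of x satisfying F' = 2G - 2F, zG' = qF - H, and H' = 2H - 2qG for a fixed z ≠ 0. Then F satisfies the third-order linear equation F''' - 4(z^{-1}q + 1)F' - 2z^{-1}q' F = 0, provided q is differentiable. -/
/-- From the zero-curvature system `F' = 2G - 2F`, `zG' = qF - H`, `H' = 2H - 2qG`
(with `q` differentiable), `F` satisfies the third-order linear equation
`F''' - 4(z⁻¹ q + 1) F' - 2 z⁻¹ q' F = 0`. -/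
theorem CH_third_order_equation_for_F
    (z : ℂ) (hz : z ≠ 0) (q q' F F' F'' F''' G G' H H' : ℝ → ℂ)
    (hq : ∀ x, HasDerivAt q (q' x) x)
    (hF : ∀ x, HasDerivAt F (F' x) x)
    (hF' : ∀ x, HasDerivAt F' (F'' x) x)
    (hF'' : ∀ x, HasDerivAt F'' (F''' x) x)
    (hG : ∀ x, HasDerivAt G (G' x) x)
    (hH : ∀ x, HasDerivAt H (H' x) x)
    (h1 : ∀ x, F' x = 2 * G x - 2 * F x)
    (h2 : ∀ x, z * G' x = q x * F x - H x)
    (h3 : ∀ x, H' x = 2 * H x - 2 * q x * G x) :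
    ∀ x, F''' x - 4 * (z⁻¹ * q x + 1) * F' x - 2 * z⁻¹ * q' x * F x = 0 := by
  have hG'eq : ∀ y, G' y = z⁻¹ * (q y * F y - H y) := by
    intro y
    field_simp
    linear_combination h2 y
  have e2 : ∀ y, F'' y = 2 * G' y - 2 * F' y := by
    intro y
    have hd : HasDerivAt F' (2 * G' y - 2 * F' y) y := by
      have hfun : F' = fun t => 2 * G t - 2 * F t := funext h1
      have hd0 : HasDerivAt (fun t => 2 * G t - 2 * F t) (2 * G' y - 2 * F' y) y :=
        ((hG y).const_mul 2).sub ((hF y).const_mul 2)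
      rwa [← hfun] at hd0
    exact (hF' y).unique hd
  have hGd : ∀ y, HasDerivAt G' (z⁻¹ * (q' y * F y + q y * F' y - H' y)) y := by
    intro y
    have hfun : G' = fun t => z⁻¹ * (q t * F t - H t) := funext hG'eq
    rw [hfun]
    exact (((hq y).mul (hF y)).sub (hH y)).const_mul z⁻¹
  intro x
  have e3 : F''' x = 2 * (z⁻¹ * (q' x * F x + q x * F' x - H' x)) - 2 * F'' x := by
    have hd : HasDerivAt F'' (2 * (z⁻¹ * (q' x * F x + q x * F' x - H' x)) - 2 * F'' x) x := by
      have hfun : F'' = fun t => 2 * G' t - 2 * F' t := funext e2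
      have hd0 : HasDerivAt (fun t => 2 * G' t - 2 * F' t)
          (2 * (z⁻¹ * (q' x * F x + q x * F' x - H' x)) - 2 * F'' x) x :=
        ((hGd x).const_mul 2).sub ((hF' x).const_mul 2)
      rwa [← hfun] at hd0
    exact (hF'' x).unique hd
  have hzinv : z⁻¹ * z = 1 := inv_mul_cancel₀ hz
  linear_combination e3 - 2 * z⁻¹ * (h3 x) - 2 * z⁻¹ * q x * (h1 x) - 4 * z⁻¹ * (h2 x)
    - 2 * (e2 x) + 4 * G' x * hzinv
end

section
/- Let q : ℝ → ℂ be C¹ and let F, G, H solve F' = 2G - 2F, zG' = qF - H, H' = 2H - 2qG with z²G² + zFH = R(z) constant in x. Then -(z²/2)F''F + (z²/4)(F')² + z²F² + zqF² = R(z). -/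
/-- The nonlinear identity (2.39a) for `F`: if `F' = 2G - 2F`, `zG' = qF - H`,
`H' = 2H - 2qG` and `z²G² + zFH = R` is constant in `x`, then
`-(z²/2)F''F + (z²/4)(F')² + z²F² + zqF² = R`. -/
theorem CH_nonlinear_identity_for_F
    (z R : ℂ) (hz : z ≠ 0) (q q' F F' F'' G G' H H' : ℝ → ℂ)
    (hq : ∀ x, HasDerivAt q (q' x) x)
    (hF : ∀ x, HasDerivAt F (F' x) x)
    (hF' : ∀ x, HasDerivAt F' (F'' x) x)
    (hG : ∀ x, HasDerivAt G (G' x) x)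
    (hH : ∀ x, HasDerivAt H (H' x) x)
    (h1 : ∀ x, F' x = 2 * G x - 2 * F x)
    (h2 : ∀ x, z * G' x = q x * F x - H x)
    (h3 : ∀ x, H' x = 2 * H x - 2 * q x * G x)
    (hR : ∀ x, z ^ 2 * G x ^ 2 + z * F x * H x = R) :
    ∀ x, -(z ^ 2 / 2) * F'' x * F x + (z ^ 2 / 4) * F' x ^ 2 + z ^ 2 * F x ^ 2
      + z * q x * F x ^ 2 = R := by
  have hGeq : G = fun x => (F' x + 2 * F x) / 2 := by
    funext x
    linear_combination (h1 x) / (-2)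
  have hG' : ∀ x, G' x = (F'' x + 2 * F' x) / 2 := by
    intro x
    have hd : HasDerivAt (fun x => (F' x + 2 * F x) / 2) ((F'' x + 2 * F' x) / 2) x :=
      ((hF' x).add ((hF x).const_mul 2)).div_const 2
    rw [← hGeq] at hd
    exact (hG x).unique hd
  intro x
  have e2 := h2 x
  have e3 := hR x
  have hGx : G x = (F' x + 2 * F x) / 2 := by rw [hGeq]
  have hHx : H x = q x * F x - z * ((F'' x + 2 * F' x) / 2) := by
    linear_combination e2 - z * (hG' x)
  rw [hGx, hHx] at e3
  linear_combination e3
end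

section
/- Let E₀ < E₁ < ⋯ < E_{2n+1} be real numbers, Σ = ⋃_{ℓ=0}^{n}[E_{2ℓ},E_{2ℓ+1}], R(z) = ∏_{m=0}^{2n+1}(z-E_m), and let P_n(z) = ∏_{j=1}^n(z-a_j) be monic of degree n with a_j ∈ [E_{2j-1},E_{2j}]. Then the function z ↦ P_n(z)/R(z)^{1/2} (with the standard branch, analytic on ℂ∖Σ) maps the open upper half-plane into the closed upper half-plane, i.e., it is a Herglotz function. -/
/-!
On the upper half-plane the normalized branch of `R^{1/2}` must be `-exp (½ ∑ₘ log (z - Eₘ))`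
(principal logarithms): both are continuous square roots of `R` on the connected set
`{Im z > 0} ∪ {Re z > E_{2n+1}}` and both are negative to the right of `E_{2n+1}`. Hence
`Im (P_n / R^{1/2}) = -|P_n / R^{1/2}| sin θ` with `θ = ∑ⱼ arg (z - aⱼ) - ½ ∑ₘ arg (z - Eₘ)`.
As `x ↦ arg (z - x)` is monotone with values in `[0, π]`, the interlacing
`E_{2j-1} ≤ aⱼ ≤ E_{2j}` gives `-π ≤ -½ (arg (z - E_{2n}) + arg (z - E_{2n+1})) ≤ θ` and
`θ ≤ -½ (arg (z - E₀) + arg (z - E₁)) ≤ 0`, so `sin θ ≤ 0`.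
-/

open Finset
open scoped Real

namespace Complex

theorem arg_eq_pi_div_two_sub_arctan {w : ℂ} (hw : 0 < w.im) :
    arg w = π / 2 - Real.arctan (w.re / w.im) := by
  have hnorm : ‖w‖ = w.im * √(1 + (w.re / w.im) ^ 2) := by
    have : w.re ^ 2 + w.im ^ 2 = w.im ^ 2 * (1 + (w.re / w.im) ^ 2) := by
      field_simp
      ring
    rw [norm_eq_sqrt_sq_add_sq, this, Real.sqrt_mul (sq_nonneg _), Real.sqrt_sq hw.le]
  rw [arg_of_im_pos hw, Real.arccos_eq_pi_div_two_sub_arcsin, Real.arctan_eq_arcsin, hnorm,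
    div_mul_eq_div_div]

theorem monotone_arg_sub_ofReal {z : ℂ} (hz : 0 < z.im) : Monotone fun x : ℝ ↦ arg (z - x) := by
  intro x y hxy
  have him : ∀ t : ℝ, 0 < (z - t).im := fun t ↦ by simpa using hz
  simp only [arg_eq_pi_div_two_sub_arctan (him _), sub_re, ofReal_re, sub_im, ofReal_im, sub_zero]
  exact sub_le_sub_left
    (Real.arctan_strictMono.monotone (div_le_div_of_nonneg_right (by linarith) hz.le)) _

end Complex

open Complex

theorem interlacing_sum_bounds (φ α : ℕ → ℝ) (n : ℕ) (hφ : ∀ m < 2 * n + 1, φ m ≤ φ (m + 1))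
    (hα : ∀ j, 1 ≤ j → j ≤ n → α j ∈ Set.Icc (φ (2 * j - 1)) (φ (2 * j))) :
    -((φ (2 * n) + φ (2 * n + 1)) / 2) ≤
        ∑ j ∈ Icc 1 n, α j - (∑ m ∈ range (2 * n + 2), φ m) / 2 ∧
      ∑ j ∈ Icc 1 n, α j - (∑ m ∈ range (2 * n + 2), φ m) / 2 ≤ -((φ 0 + φ 1) / 2) := by
  induction n with
  | zero => simp [sum_range_succ]
  | succ n ih =>
    obtain ⟨ih_lo, ih_hi⟩ := ih (fun m hm ↦ hφ m (by omega)) (fun j h₁ h₂ ↦ hα j h₁ (by omega))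
    obtain ⟨hα_lo, hα_hi⟩ := hα (n + 1) le_add_self le_rfl
    have h₀ := hφ (2 * n) (by omega)
    have h₁ := hφ (2 * n + 1) (by omega)
    have h₂ := hφ (2 * n + 2) (by omega)
    rw [show 2 * (n + 1) - 1 = 2 * n + 1 by omega] at hα_lo
    rw [sum_Icc_succ_top (by omega), show 2 * (n + 1) + 2 = 2 * n + 2 + 1 + 1 by ring,
      sum_range_succ, sum_range_succ]
    simp only [show 2 * (n + 1) = 2 * n + 2 by ring] at hα_hi ⊢
    constructor <;> linarith

theorem sin_interlacing_sum_nonpos (φ α : ℕ → ℝ) (n : ℕ) (hφ : ∀ m < 2 * n + 1, φ m ≤ φ (m + 1))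
    (hφ_mem : ∀ m, φ m ∈ Set.Icc 0 π)
    (hα : ∀ j, 1 ≤ j → j ≤ n → α j ∈ Set.Icc (φ (2 * j - 1)) (φ (2 * j))) :
    Real.sin (∑ j ∈ Icc 1 n, α j - (∑ m ∈ range (2 * n + 2), φ m) / 2) ≤ 0 := by
  obtain ⟨h_lo, h_hi⟩ := interlacing_sum_bounds φ α n hφ hα
  exact Real.sin_nonpos_of_nonpos_of_neg_pi_le (by linarith [(hφ_mem 0).1, (hφ_mem 1).1])
    (by linarith [(hφ_mem (2 * n)).2, (hφ_mem (2 * n + 1)).2])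

section NegSqrtProd

variable {ι : Type*} (s : Finset ι) (c : ι → ℝ)

/-- The square root of `∏ i ∈ s, (z - c i)` built from principal logarithms, with the sign that
makes it negative on the real axis to the right of every `c i`. -/
noncomputable def negSqrtProd (z : ℂ) : ℂ :=
  -exp ((∑ i ∈ s, log (z - c i)) / 2)

theorem negSqrtProd_ne_zero (z : ℂ) : negSqrtProd s c z ≠ 0 :=
  neg_ne_zero.2 (exp_ne_zero _)

variable {s c}

theorem negSqrtProd_sq {z : ℂ} (hz : ∀ i ∈ s, z ≠ c i) :
    negSqrtProd s c z ^ 2 = ∏ i ∈ s, (z - c i) := by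
  rw [negSqrtProd, neg_sq, ← exp_nat_mul, Nat.cast_ofNat, mul_div_cancel₀ _ two_ne_zero, exp_sum]
  exact prod_congr rfl fun i hi ↦ exp_log (sub_ne_zero.2 (hz i hi))

theorem continuousAt_negSqrtProd {z : ℂ} (hz : ∀ i ∈ s, z - c i ∈ slitPlane) :
    ContinuousAt (negSqrtProd s c) z := by
  have hsum : ContinuousAt (fun w ↦ ∑ i ∈ s, log (w - c i)) z :=
    tendsto_finsetSum _ fun i hi ↦ (continuousAt_id.sub continuousAt_const).clog (hz i hi)
  exact ((hsum.div_const 2).cexp).neg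

theorem negSqrtProd_ofReal_re_neg {x : ℝ} (hx : ∀ i ∈ s, c i < x) :
    (negSqrtProd s c x).re < 0 := by
  have hlog : ∑ i ∈ s, log ((x : ℂ) - c i) = ((∑ i ∈ s, Real.log (x - c i) : ℝ) : ℂ) := by
    push_cast
    exact sum_congr rfl fun i hi ↦ by
      rw [← ofReal_sub, ofReal_log (sub_nonneg.2 (hx i hi).le)]
  rw [negSqrtProd, hlog, ← ofReal_ofNat, ← ofReal_div, ← ofReal_exp, neg_re, ofReal_re,
    neg_neg_iff_pos]
  exact Real.exp_pos _

theorem eqOn_negSqrtProd_of_sq_eq {f : ℂ → ℂ} {b : ℝ} (hb : ∀ i ∈ s, c i ≤ b)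
    (hf : ContinuousOn f ({z : ℂ | 0 < z.im} ∪ {z : ℂ | b < z.re}))
    (hsq : ∀ z ∈ {z : ℂ | 0 < z.im} ∪ {z : ℂ | b < z.re}, f z ^ 2 = ∏ i ∈ s, (z - c i))
    {x : ℝ} (hx : b < x) (hfx : (f x).re < 0) :
    Set.EqOn f (negSqrtProd s c) ({z : ℂ | 0 < z.im} ∪ {z : ℂ | b < z.re}) := by
  set V : Set ℂ := {z : ℂ | 0 < z.im} ∪ {z : ℂ | b < z.re}
  have hslit : ∀ z ∈ V, ∀ i ∈ s, z - c i ∈ slitPlane := by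
    rintro z (hz | hz) i hi <;> rw [mem_slitPlane_iff]
    · exact Or.inr (by simpa using hz.ne')
    · exact Or.inl (by simpa using (hb i hi).trans_lt hz)
  have hne : ∀ z ∈ V, ∀ i ∈ s, z ≠ c i :=
    fun z hz i hi h ↦ slitPlane_ne_zero (hslit z hz i hi) (sub_eq_zero.2 h)
  have hxV : (x : ℂ) ∈ V := Or.inr (by simpa using hx)
  have hV : IsPreconnected V :=
    (convex_halfSpace_im_gt 0).isPreconnected.union ((b + 1 : ℝ) + I)
      (by simp) (by simp) (convex_halfSpace_re_gt b).isPreconnected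
  refine hV.eq_of_sq_eq hf (fun z hz ↦ (continuousAt_negSqrtProd (hslit z hz)).continuousWithinAt)
    (fun z hz ↦ by simp only [Pi.pow_apply, hsq z hz, negSqrtProd_sq (hne z hz)])
    (fun {_} _ ↦ negSqrtProd_ne_zero s c _) hxV ?_
  refine (eq_or_eq_neg_of_sq_eq_sq _ _ ?_).resolve_right fun h ↦ ?_
  · rw [hsq _ hxV, negSqrtProd_sq (hne _ hxV)]
  · rw [h, neg_re] at hfx
    linarith [negSqrtProd_ofReal_re_neg fun i hi ↦ (hb i hi).trans_lt hx]

theorem im_prod_div_negSqrtProd_nonneg {κ : Type*} (t : Finset κ) (a : κ → ℝ) {z : ℂ}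
    (hz : 0 < z.im)
    (hsin : Real.sin (∑ j ∈ t, arg (z - a j) - (∑ i ∈ s, arg (z - c i)) / 2) ≤ 0) :
    0 ≤ ((∏ j ∈ t, (z - a j)) / negSqrtProd s c z).im := by
  have hprod : ∏ j ∈ t, (z - a j) = exp (∑ j ∈ t, log (z - a j)) := by
    rw [exp_sum]
    refine prod_congr rfl fun j _ ↦ (exp_log fun h ↦ ?_).symm
    exact hz.ne' (by simpa using congrArg im h)
  rw [hprod, negSqrtProd, div_neg, ← exp_sub, neg_im, exp_im, neg_nonneg, sub_im, div_ofNat_im,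
    im_sum, im_sum]
  simp only [log_im]
  exact mul_nonpos_of_nonneg_of_nonpos (Real.exp_pos _).le hsin

end NegSqrtProd

/-- Lemma 5.3 (i), Herglotz property: with `Σ = ⋃ℓ [E_{2ℓ}, E_{2ℓ+1}]` and the branch
`R^{1/2}` analytic on `ℂ∖Σ` with `(R^{1/2})² = R` and `R^{1/2}(λ) < 0` for real
`λ > E_{2n+1}`, the function `P_n/R^{1/2}` with `P_n(z) = ∏ (z - a_j)`,
`a_j ∈ [E_{2j-1}, E_{2j}]`, maps the open upper half-plane into the closed upper
half-plane. -/
theorem Pn_over_Rhalf_is_Herglotz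
    (n : ℕ) (E : ℕ → ℝ) (hE : ∀ m, m < 2 * n + 1 → E m < E (m + 1))
    (a : ℕ → ℝ) (ha : ∀ j, 1 ≤ j → j ≤ n → a j ∈ Set.Icc (E (2 * j - 1)) (E (2 * j)))
    (Sigma : Set ℂ)
    (hSigma : Sigma = {z : ℂ | z.im = 0 ∧ ∃ ℓ ≤ n, z.re ∈ Set.Icc (E (2 * ℓ)) (E (2 * ℓ + 1))})
    (Rhalf : ℂ → ℂ)
    (hRhalf_analytic : DifferentiableOn ℂ Rhalf Sigmaᶜ)
    (hRhalf_sq : ∀ z ∈ Sigmaᶜ, Rhalf z ^ 2 = ∏ m ∈ Finset.range (2 * n + 2), (z - (E m : ℂ)))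
    (hRhalf_normalization : ∀ lam : ℝ, E (2 * n + 1) < lam →
      (Rhalf lam).im = 0 ∧ (Rhalf lam).re < 0) :
    ∀ z : ℂ, 0 < z.im →
      0 ≤ ((∏ j ∈ Finset.Icc 1 n, (z - (a j : ℂ))) / Rhalf z).im := by
  intro z hz
  have hE_le : ∀ m ≤ 2 * n + 1, E m ≤ E (2 * n + 1) := fun m hm ↦
    (strictMonoOn_Iic_of_lt_succ (by simpa using hE)).monotoneOn hm le_rfl hm
  have hV : {w : ℂ | 0 < w.im} ∪ {w : ℂ | E (2 * n + 1) < w.re} ⊆ Sigmaᶜ := by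
    subst hSigma
    rintro w (hw | hw) ⟨him, ℓ, hℓ, hre⟩
    · exact hw.ne' him
    · exact absurd (hre.2.trans (hE_le _ (by omega))) (not_le.2 hw)
  have hRhalf : Rhalf z = negSqrtProd (range (2 * n + 2)) E z :=
    eqOn_negSqrtProd_of_sq_eq (fun m hm ↦ hE_le m (Nat.le_of_lt_succ (mem_range.1 hm)))
      (hRhalf_analytic.continuousOn.mono hV) (fun w hw ↦ hRhalf_sq w (hV hw))
      (lt_add_one _) (hRhalf_normalization _ (lt_add_one _)).2 (Or.inl hz)
  have harg := monotone_arg_sub_ofReal hz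
  rw [hRhalf]
  refine im_prod_div_negSqrtProd_nonneg _ _ hz (sin_interlacing_sum_nonpos _ _ n
    (fun m hm ↦ harg (hE m hm).le) (fun m ↦ ⟨arg_nonneg_iff.2 (by simpa using hz.le), arg_le_pi _⟩)
    (fun j h₁ h₂ ↦ ⟨harg (ha j h₁ h₂).1, harg (ha j h₁ h₂).2⟩))
end

section
/- Let m₊ and m₋ be complex numbers with Im m₊ > 0 and Im m₋ < 0 (so m₋ ≠ m₊). Define the 2×2 matrix M with entries M₁₁ = (m₋ - m₊)^{-1}, M₁₂ = M₂₁ = (1/2)(m₋ - m₊)^{-1}(m₋ + m₊), M₂₂ = (m₋ - m₊)^{-1} m₋ m₊. Then Im M := (M - M*)/(2i) is positive semidefinite. -/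
/-!
Since `M` is symmetric, `(M - Mᴴ)/(2i)` is the matrix of entrywise imaginary parts of `M`.
Writing `m₋ = a + ib`, `m₊ = c + ie` with `b < 0 < e`, that matrix equals
`|m₋ - m₊|⁻² (e vvᵀ + (-b) wwᵀ + be(b - e) e₂e₂ᵀ)` with `v = (1, a)`, `w = (1, c)`, `e₂ = (0, 1)`,
a nonnegative combination of rank-one positive semidefinite matrices.
-/

open Matrix ComplexOrder

theorem Matrix.IsSymm.inv_two_I_smul_sub_conjTranspose {n : Type*} {M : Matrix n n ℂ}
    (hM : M.IsSymm) : (2 * Complex.I)⁻¹ • (M - Mᴴ) = M.map (fun z => (z.im : ℂ)) := by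
  ext i j
  rw [smul_apply, sub_apply, conjTranspose_apply, hM.apply i j, map_apply,
    Complex.star_def, Complex.sub_conj, smul_eq_mul, Complex.ofReal_mul]
  field_simp
  push_cast
  ring

noncomputable def weylMatrix (mp mm : ℂ) : Matrix (Fin 2) (Fin 2) ℂ :=
  !![(mm - mp)⁻¹, (1/2) * (mm - mp)⁻¹ * (mm + mp);
     (1/2) * (mm - mp)⁻¹ * (mm + mp), (mm - mp)⁻¹ * mm * mp]

theorem weylMatrix_isSymm (mp mm : ℂ) : (weylMatrix mp mm).IsSymm := by
  ext i j
  fin_cases i <;> fin_cases j <;> rfl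

theorem weylMatrix_map_im (mp mm : ℂ) :
    (weylMatrix mp mm).map (fun z => (z.im : ℂ)) =
      (Complex.normSq (mm - mp))⁻¹ •
        (mp.im • vecMulVec ![1, (mm.re : ℂ)] (star ![1, (mm.re : ℂ)]) +
          (-mm.im) • vecMulVec ![1, (mp.re : ℂ)] (star ![1, (mp.re : ℂ)]) +
          (mm.im * mp.im * (mm.im - mp.im)) • vecMulVec ![0, 1] (star ![0, 1])) := by
  ext i j
  simp only [map_apply, Matrix.smul_apply, Matrix.add_apply, vecMulVec_apply, Pi.star_apply]
  fin_cases i <;> fin_cases j <;>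
  · simp [weylMatrix, Complex.ext_iff, Complex.div_im, Complex.div_re, Complex.normSq_apply]
    field_simp
    ring

/-- The Weyl–Titchmarsh matrix built from half-line Weyl functions has positive
semidefinite imaginary part: if `Im m₊ > 0 > Im m₋`, the matrix with entries
`M₁₁ = (m₋-m₊)⁻¹`, `M₁₂ = M₂₁ = (1/2)(m₋-m₊)⁻¹(m₋+m₊)`, `M₂₂ = (m₋-m₊)⁻¹m₋m₊`
satisfies `(M - M*)/(2i) ≥ 0`. -/
theorem weyl_matrix_posSemidef
    (mp mm : ℂ) (hmp : 0 < mp.im) (hmm : mm.im < 0)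
    (M : Matrix (Fin 2) (Fin 2) ℂ)
    (hM : M = !![(mm - mp)⁻¹, (1/2) * (mm - mp)⁻¹ * (mm + mp);
                 (1/2) * (mm - mp)⁻¹ * (mm + mp), (mm - mp)⁻¹ * mm * mp]) :
    ((2 * Complex.I)⁻¹ • (M - Mᴴ)).PosSemidef := by
  obtain rfl : M = weylMatrix mp mm := hM
  rw [(weylMatrix_isSymm mp mm).inv_two_I_smul_sub_conjTranspose, weylMatrix_map_im]
  have hcoeff : 0 ≤ mm.im * mp.im * (mm.im - mp.im) :=
    mul_nonneg_of_nonpos_of_nonpos (mul_nonpos_of_nonpos_of_nonneg hmm.le hmp.le) (by linarith)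
  refine PosSemidef.smul ?_ (inv_nonneg.2 (Complex.normSq_nonneg _))
  refine .add (.add ?_ ?_) ?_
  · exact (posSemidef_vecMulVec_self_star _).smul hmp.le
  · exact (posSemidef_vecMulVec_self_star _).smul (neg_nonneg.2 hmm.le)
  · exact (posSemidef_vecMulVec_self_star _).smul hcoeff
end

section
/- Let w : ℝ → ℝ be continuous with w(x) ≥ δ > 0 and w ∈ L^∞(ℝ). For z ∈ ℂ∖ℝ, every solution ψ of -ψ'' + ψ = z w ψ on [x₀, ∞) that lies in L²((x₀,∞)) with weight w is, up to scalar multiples, unique; i.e., the weighted Sturm–Liouville problem -ψ'' + ψ = z w ψ is in the limit point case at +∞. -/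
/-!
With `q = 1 - z w`, which is bounded, the equation reads `u'' = q u`. If a solution `u` lies in
`L²(x₀, ∞)`, so does `u'' = q u`, and then so does `u'`: integrating
`⟪u, u'⟫' = ‖u'‖² + ⟪u, u''⟫` bounds `∫_{x₀}^b ‖u'‖²` by `⟪u b, u' b⟫` plus a constant, while
`⟪u b, u' b⟫ = (‖u‖²)'(b) / 2` cannot stay `≥ 1` for all large `b` because `‖u‖²` is integrable.
So the Wronskian `u v' - u' v` of two such solutions is integrable on `(x₀, ∞)`. Being constant,
it vanishes, and uniqueness for the Cauchy problem makes `u` and `v` linearly dependent.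
-/

open MeasureTheory Set Filter Topology
open scoped RealInnerProductSpace

namespace MeasureTheory

variable {α : Type*} [MeasurableSpace α] {μ : Measure α}

theorem MemLp.integrable_inner {𝕜 E : Type*} [RCLike 𝕜] [NormedAddCommGroup E]
    [InnerProductSpace 𝕜 E] {f g : α → E} (hf : MemLp f 2 μ) (hg : MemLp g 2 μ) :
    Integrable (fun x => inner 𝕜 (f x) (g x)) μ :=
  (L2.integrable_inner (hf.toLp f) (hg.toLp g)).congr <| by
    filter_upwards [hf.coeFn_toLp, hg.coeFn_toLp] with x hfx hgx
    rw [hfx, hgx]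

theorem memLp_two_of_integrable_mul_sq_norm {F : Type*} [NormedAddCommGroup F] {f : α → F}
    {w : α → ℝ} {δ : ℝ} (hδ : 0 < δ) (hw : ∀ x, δ ≤ w x) (hf : AEStronglyMeasurable f μ)
    (h : Integrable (fun x => w x * ‖f x‖ ^ 2) μ) : MemLp f 2 μ := by
  refine (memLp_two_iff_integrable_sq_norm hf).2 <|
    (h.const_mul δ⁻¹).mono' (hf.norm.pow 2) (ae_of_all _ fun x => ?_)
  rw [norm_pow, norm_norm, le_inv_mul_iff₀ hδ]
  exact mul_le_mul_of_nonneg_right (hw x) (sq_nonneg _)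

end MeasureTheory

theorem frequently_lt_of_hasDerivAt_of_integrableOn_Ioi {N N' : ℝ → ℝ} {a c : ℝ} (hc : 0 < c)
    (hN : ∀ x, HasDerivAt N (N' x) x) (hint : IntegrableOn N (Ioi a)) :
    ∃ᶠ x in atTop, N' x < c := by
  rw [frequently_atTop]
  intro b₀
  by_contra! hge
  set b := max a b₀
  have hgrowth : ∀ x ∈ Ici b, c * (x - b) ≤ N x - N b :=
    fun x hx => (convex_Ici b).mul_sub_le_image_sub_of_le_deriv
      (fun y _ => (hN y).continuousAt.continuousWithinAt)
      (fun y _ => (hN y).differentiableAt.differentiableWithinAt)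
      (fun y hy => (hN y).deriv ▸ hge y ((le_max_right a b₀).trans (interior_subset hy)))
      b self_mem_Ici x hx hx
  have hbt : b ≤ b + (1 + |N b|) / c := le_add_of_nonneg_right (by positivity)
  have hone : IntegrableOn (fun _ => (1 : ℝ)) (Ioi (b + (1 + |N b|) / c)) := by
    refine (hint.mono_set (Ioi_subset_Ioi ((le_max_left a b₀).trans hbt))).mono'
      aestronglyMeasurable_const ((ae_restrict_iff' measurableSet_Ioi).2 (ae_of_all _ ?_))
    intro x hx
    have hcx : 1 + |N b| ≤ c * (x - b) := by
      rw [← div_le_iff₀' hc]; linarith [mem_Ioi.1 hx]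
    rw [norm_one]
    linarith [hgrowth x (hbt.trans (le_of_lt hx)), neg_abs_le (N b)]
  simp [integrableOn_const_iff] at hone

section RealInnerProductSpace

variable {E : Type*} [NormedAddCommGroup E] [InnerProductSpace ℝ E]

theorem integral_norm_sq_deriv_le {f f' f'' : ℝ → E} {a b : ℝ} (hab : a ≤ b)
    (hf : ∀ x, HasDerivAt f (f' x) x) (hf' : ∀ x, HasDerivAt f' (f'' x) x)
    (hint : IntegrableOn (fun x => ⟪f x, f'' x⟫) (Ioi a)) :
    ∫ x in a..b, ‖f' x‖ ^ 2 ≤ ⟪f b, f' b⟫ - ⟪f a, f' a⟫ + ∫ x in Ioi a, |⟪f x, f'' x⟫| := by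
  have hderiv : ∀ x, HasDerivAt (fun t => ⟪f t, f' t⟫) (⟪f x, f'' x⟫ + ‖f' x‖ ^ 2) x :=
    fun x => by simpa only [real_inner_self_eq_norm_sq] using (hf x).inner ℝ (hf' x)
  have hint₁ : IntervalIntegrable (fun x => ⟪f x, f'' x⟫) volume a b :=
    (intervalIntegrable_iff_integrableOn_Ioc_of_le hab).2 (hint.mono_set Ioc_subset_Ioi_self)
  have hint₂ : IntervalIntegrable (fun x => ‖f' x‖ ^ 2) volume a b :=
    ((continuous_iff_continuousAt.2 fun x => (hf' x).continuousAt).norm.pow 2).intervalIntegrable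
      a b
  have hftc := intervalIntegral.integral_eq_sub_of_hasDerivAt (fun x _ => hderiv x)
    (hint₁.add hint₂)
  rw [intervalIntegral.integral_add hint₁ hint₂] at hftc
  have hbound : -∫ x in a..b, ⟪f x, f'' x⟫ ≤ ∫ x in Ioi a, |⟪f x, f'' x⟫| :=
    calc -∫ x in a..b, ⟪f x, f'' x⟫
        ≤ |∫ x in a..b, ⟪f x, f'' x⟫| := neg_le_abs _
      _ ≤ ∫ x in a..b, |⟪f x, f'' x⟫| := intervalIntegral.abs_integral_le_integral_abs hab
      _ = ∫ x in Ioc a b, |⟪f x, f'' x⟫| := intervalIntegral.integral_of_le hab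
      _ ≤ ∫ x in Ioi a, |⟪f x, f'' x⟫| :=
        setIntegral_mono_set hint.abs (ae_of_all _ fun _ => abs_nonneg _)
          Ioc_subset_Ioi_self.eventuallyLE
  linarith

theorem memLp_two_deriv_of_memLp_two {f f' f'' : ℝ → E} {a : ℝ}
    (hf : ∀ x, HasDerivAt f (f' x) x) (hf' : ∀ x, HasDerivAt f' (f'' x) x)
    (h : MemLp f 2 (volume.restrict (Ioi a))) (h'' : MemLp f'' 2 (volume.restrict (Ioi a))) :
    MemLp f' 2 (volume.restrict (Ioi a)) := by
  have hcont : Continuous f' := continuous_iff_continuousAt.2 fun x => (hf' x).continuousAt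
  rw [memLp_two_iff_integrable_sq_norm hcont.aestronglyMeasurable]
  have hsmall : ∃ᶠ b in atTop, ⟪f b, f' b⟫ < 1 := by
    simpa using frequently_lt_of_hasDerivAt_of_integrableOn_Ioi two_pos
      (fun x => (hf x).norm_sq) ((memLp_two_iff_integrable_sq_norm h.1).1 h)
  have := frequently_iff_neBot.1 hsmall
  refine integrableOn_Ioi_of_intervalIntegral_norm_bounded
    (1 - ⟪f a, f' a⟫ + ∫ x in Ioi a, |⟪f x, f'' x⟫|) a
    (l := atTop ⊓ 𝓟 {b | ⟪f b, f' b⟫ < 1}) (b := id)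
    (fun b => (hcont.norm.pow 2).integrableOn_Ioc) (tendsto_id.mono_left inf_le_left) ?_
  filter_upwards [mem_inf_of_left (eventually_ge_atTop a),
    mem_inf_of_right (mem_principal_self _)] with b hab hb
  simp only [id, norm_pow, norm_norm]
  linarith [integral_norm_sq_deriv_le hab hf hf' (h.integrable_inner (𝕜 := ℝ) h''), hb]

end RealInnerProductSpace

namespace SturmLiouville

def IsSolution (q u u' : ℝ → ℂ) : Prop :=
  ∀ x, HasDerivAt u (u' x) x ∧ HasDerivAt u' (q x * u x) x

def wronskian (u u' v v' : ℝ → ℂ) (x : ℝ) : ℂ :=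
  u x * v' x - u' x * v x

namespace IsSolution

variable {q u u' v v' : ℝ → ℂ}

theorem continuous (hu : IsSolution q u u') : Continuous u :=
  continuous_iff_continuousAt.2 fun x => (hu x).1.continuousAt

theorem mul_add_mul (hu : IsSolution q u u') (hv : IsSolution q v v') (a b : ℂ) :
    IsSolution q (fun x => a * u x + b * v x) (fun x => a * u' x + b * v' x) := fun x =>
  ⟨((hu x).1.const_mul a).add ((hv x).1.const_mul b),
    (((hu x).2.const_mul a).add ((hv x).2.const_mul b)).congr_deriv (by ring)⟩

theorem wronskian_eq (hu : IsSolution q u u') (hv : IsSolution q v v') (x y : ℝ) :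
    wronskian u u' v v' x = wronskian u u' v v' y := by
  have hderiv : ∀ t, HasDerivAt (wronskian u u' v v') 0 t := fun t =>
    (((hu t).1.mul (hv t).2).sub ((hu t).2.mul (hv t).1)).congr_deriv (by ring)
  exact is_const_of_deriv_eq_zero (fun t => (hderiv t).differentiableAt)
    (fun t => (hderiv t).deriv) x y

theorem eq_zero_of_eq_zero_of_deriv_eq_zero {K : ℝ} (hq : ∀ x, ‖q x‖ ≤ K)
    (hu : IsSolution q u u') {t₀ : ℝ} (h₀ : u t₀ = 0) (h₀' : u' t₀ = 0) : u = 0 := by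
  have hlip : ∀ t, LipschitzWith (max 1 K.toNNReal) fun p : ℂ × ℂ => (p.2, q t * p.1) := fun t =>
    (LipschitzWith.prod_snd.prodMk ((lipschitzWith_smul (q t)).comp LipschitzWith.prod_fst)).weaken
      (max_le_max le_rfl (by simpa using NNReal.le_toNNReal_of_coe_le (hq t)))
  have huniq := ODE_solution_unique_univ (s := fun _ => univ) (t₀ := t₀)
    (fun t => (hlip t).lipschitzOnWith) (g := 0)
    (fun t => ⟨(hu t).1.prodMk (hu t).2, mem_univ _⟩)
    (fun t => ⟨(hasDerivAt_zero t).congr_deriv (by simp [Prod.zero_eq_mk]), mem_univ _⟩)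
    (by simp [h₀, h₀'])
  funext x
  exact congrArg Prod.fst (congrFun huniq x)

theorem exists_mul_add_mul_eq_zero_of_wronskian_eq_zero {K : ℝ} (hq : ∀ x, ‖q x‖ ≤ K)
    (hu : IsSolution q u u') (hv : IsSolution q v v') {t₀ : ℝ}
    (hW : wronskian u u' v v' t₀ = 0) :
    ∃ a b : ℂ, (a, b) ≠ (0, 0) ∧ ∀ x, a * u x + b * v x = 0 := by
  obtain ⟨c, hc, hker⟩ := Matrix.exists_mulVec_eq_zero_iff.2
    (show (!![u t₀, v t₀; u' t₀, v' t₀]).det = 0 by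
      simpa [Matrix.det_fin_two, wronskian, mul_comm] using hW)
  simp only [Matrix.cons_mulVec, Matrix.cons_val_zero, Matrix.cons_val_one, Matrix.empty_mulVec,
    dotProduct, Fin.sum_univ_two, funext_iff, Fin.forall_fin_two, Pi.zero_apply] at hker
  refine ⟨c 0, c 1, by simpa [funext_iff, Fin.forall_fin_two] using hc, fun x => ?_⟩
  have hzero := (hu.mul_add_mul hv (c 0) (c 1)).eq_zero_of_eq_zero_of_deriv_eq_zero hq
    (t₀ := t₀) (by linear_combination hker.1) (by linear_combination hker.2)
  exact congrFun hzero x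

theorem memLp_deriv {K : ℝ} (hq : ∀ x, ‖q x‖ ≤ K) (hu : IsSolution q u u') {x₀ : ℝ}
    (h : MemLp u 2 (volume.restrict (Ioi x₀))) : MemLp u' 2 (volume.restrict (Ioi x₀)) := by
  -- `q` itself need not be measurable: `q u = deriv u'` is.
  have hmeas : AEStronglyMeasurable (fun x => q x * u x) (volume.restrict (Ioi x₀)) := by
    have hderiv : deriv u' = fun x => q x * u x := funext fun x => (hu x).2.deriv
    exact hderiv ▸ (measurable_deriv u').aestronglyMeasurable
  refine memLp_two_deriv_of_memLp_two (fun x => (hu x).1) (fun x => (hu x).2) h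
    (h.of_le_mul (c := K) hmeas (ae_of_all _ fun x => ?_))
  rw [norm_mul]
  exact mul_le_mul_of_nonneg_right (hq x) (norm_nonneg _)

theorem wronskian_eq_zero_of_memLp {K : ℝ} (hq : ∀ x, ‖q x‖ ≤ K) (hu : IsSolution q u u')
    (hv : IsSolution q v v') {x₀ : ℝ} (hu₂ : MemLp u 2 (volume.restrict (Ioi x₀)))
    (hv₂ : MemLp v 2 (volume.restrict (Ioi x₀))) : wronskian u u' v v' x₀ = 0 := by
  have hint : IntegrableOn (wronskian u u' v v') (Ioi x₀) :=
    (hu₂.integrable_mul (hv.memLp_deriv hq hv₂)).sub ((hu.memLp_deriv hq hu₂).integrable_mul hv₂)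
  have hconst : IntegrableOn (fun _ => wronskian u u' v v' x₀) (Ioi x₀) :=
    hint.congr_fun (fun x _ => hu.wronskian_eq hv x x₀) measurableSet_Ioi
  simpa [integrableOn_const_iff] using hconst

theorem exists_mul_add_mul_eq_zero_of_memLp {K : ℝ} (hq : ∀ x, ‖q x‖ ≤ K)
    (hu : IsSolution q u u') (hv : IsSolution q v v') {x₀ : ℝ}
    (hu₂ : MemLp u 2 (volume.restrict (Ioi x₀))) (hv₂ : MemLp v 2 (volume.restrict (Ioi x₀))) :
    ∃ a b : ℂ, (a, b) ≠ (0, 0) ∧ ∀ x, a * u x + b * v x = 0 :=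
  hu.exists_mul_add_mul_eq_zero_of_wronskian_eq_zero hq hv
    (hu.wronskian_eq_zero_of_memLp hq hv hu₂ hv₂)

end IsSolution

end SturmLiouville

theorem limit_point_case_weighted_SL_general
    (w : ℝ → ℝ) (δ : ℝ) (hδ : 0 < δ)
    (hw_lower : ∀ x, δ ≤ w x) (hw_upper : ∃ M, ∀ x, w x ≤ M)
    (z : ℂ) (x₀ : ℝ)
    (ψ ψ' φ φ' : ℝ → ℂ)
    (hψ : ∀ x, HasDerivAt ψ (ψ' x) x)
    (hψ' : ∀ x, HasDerivAt ψ' (ψ x - z * (w x : ℂ) * ψ x) x)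
    (hφ : ∀ x, HasDerivAt φ (φ' x) x)
    (hφ' : ∀ x, HasDerivAt φ' (φ x - z * (w x : ℂ) * φ x) x)
    (hψL2 : IntegrableOn (fun x => w x * ‖ψ x‖ ^ 2) (Set.Ioi x₀))
    (hφL2 : IntegrableOn (fun x => w x * ‖φ x‖ ^ 2) (Set.Ioi x₀)) :
    ∃ a b : ℂ, (a, b) ≠ (0, 0) ∧ ∀ x ∈ Set.Ici x₀, a * ψ x + b * φ x = 0 := by
  obtain ⟨M, hM⟩ := hw_upper
  set q : ℝ → ℂ := fun x => 1 - z * w x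
  have hq : ∀ x, ‖q x‖ ≤ 1 + ‖z‖ * M := fun x =>
    calc ‖q x‖ ≤ 1 + ‖z‖ * |w x| := by simpa using norm_sub_le (1 : ℂ) (z * w x)
      _ ≤ 1 + ‖z‖ * M := by
        rw [abs_of_pos (hδ.trans_le (hw_lower x))]
        gcongr
        exact hM x
  have hsol : ∀ {u u' : ℝ → ℂ}, (∀ x, HasDerivAt u (u' x) x) →
      (∀ x, HasDerivAt u' (u x - z * w x * u x) x) → SturmLiouville.IsSolution q u u' :=
    fun hu hu' x => ⟨hu x, (hu' x).congr_deriv (by ring)⟩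
  have hmemLp : ∀ {u u' : ℝ → ℂ}, SturmLiouville.IsSolution q u u' →
      IntegrableOn (fun x => w x * ‖u x‖ ^ 2) (Ioi x₀) → MemLp u 2 (volume.restrict (Ioi x₀)) :=
    fun hu h => memLp_two_of_integrable_mul_sq_norm hδ hw_lower hu.continuous.aestronglyMeasurable h
  have hψs := hsol hψ hψ'
  have hφs := hsol hφ hφ'
  obtain ⟨a, b, hab, hdep⟩ :=
    hψs.exists_mul_add_mul_eq_zero_of_memLp hq hφs (hmemLp hψs hψL2) (hmemLp hφs hφL2)
  exact ⟨a, b, hab, fun x _ => hdep x⟩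

/-- Limit point case at `+∞` for the weighted Sturm–Liouville problem
`-ψ'' + ψ = z w ψ` with `0 < δ ≤ w ∈ L^∞`: for `z ∈ ℂ∖ℝ`, any two solutions lying
in `L²((x₀,∞); w dx)` are linearly dependent. -/
theorem limit_point_case_weighted_SL
    (w : ℝ → ℝ) (hw_cont : Continuous w) (δ : ℝ) (hδ : 0 < δ)
    (hw_lower : ∀ x, δ ≤ w x) (hw_upper : ∃ M, ∀ x, w x ≤ M)
    (z : ℂ) (hz : z.im ≠ 0) (x₀ : ℝ)
    (ψ ψ' φ φ' : ℝ → ℂ)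
    (hψ : ∀ x, HasDerivAt ψ (ψ' x) x)
    (hψ' : ∀ x, HasDerivAt ψ' (ψ x - z * (w x : ℂ) * ψ x) x)
    (hφ : ∀ x, HasDerivAt φ (φ' x) x)
    (hφ' : ∀ x, HasDerivAt φ' (φ x - z * (w x : ℂ) * φ x) x)
    (hψL2 : IntegrableOn (fun x => w x * ‖ψ x‖ ^ 2) (Set.Ioi x₀))
    (hφL2 : IntegrableOn (fun x => w x * ‖φ x‖ ^ 2) (Set.Ioi x₀)) :
    ∃ a b : ℂ, (a, b) ≠ (0, 0) ∧ ∀ x ∈ Set.Ici x₀, a * ψ x + b * φ x = 0 :=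
  limit_point_case_weighted_SL_general w δ hδ hw_lower hw_upper z x₀ ψ ψ' φ φ' hψ hψ' hφ hφ' hψL2
    hφL2
end
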